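/- arXiv:1812.06231 — 2 statements merged into one kernel-verified Lean document; each statement's English description precedes it below -/
import Mathlib

section
/- Let q be a power of 2 and let m ≥ 2 be an integer with gcd(q-1, m(m-1)) = 1. Then the discriminants of the monic irreducible polynomials of degree m in F_q[x] are equally distributed among the elements of F_q^×; that is, for any two elements d_1, d_2 ∈ F_q^×, the number of monic irreducible polynomials of degree m in F_q[x] with discriminant d_1 equals the number with discriminant d_2. -/
open Polynomial
open scoped Classical

/-- The discriminant of a polynomial `f` of degree `m ≥ 2` over a field `F`, computed in an
algebraic closure via the standard formula
`disc(f) = (-1)^(m(m-1)/2) · a_m^(m-2) · ∏_i f'(α_i)`, where `a_m` is the leading coefficient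
and the `α_i` are the roots of `f` (with multiplicity) in the algebraic closure; this equals
`a_m^(2m-2) · ∏_{i<j} (α_i - α_j)^2`.  For `f` of degree at most 1 it is defined to be `1`. -/
noncomputable def polyDisc {F : Type*} [Field F] (f : F[X]) : AlgebraicClosure F :=
  if f.natDegree ≤ 1 then 1
  else
    (-1) ^ (f.natDegree * (f.natDegree - 1) / 2) *
      algebraMap F (AlgebraicClosure F) f.leadingCoeff ^ (f.natDegree - 2) *
      (Multiset.map (fun a => ((derivative f).map (algebraMap F (AlgebraicClosure F))).eval a)
        (f.map (algebraMap F (AlgebraicClosure F))).roots).prod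

/-- The Möbius function on polynomials over a field: `μ f = (-1)^k` if `f` is squarefree
with `k` (distinct) monic irreducible factors, and `μ f = 0` otherwise. -/
noncomputable def polyMu {F : Type*} [Field F] (f : F[X]) : ℤ :=
  if Squarefree f then (-1) ^ {π : F[X] | π.Monic ∧ Irreducible π ∧ π ∣ f}.ncard else 0

/-- `f` has factorization type `λ` (a partition of `m`): `f` is a product of distinct monic
irreducible polynomials whose degrees form the multiset of parts of `λ`.  The set
`S_{λ,F}` of monic squarefree polynomials of factorization type `λ` is
`{f | hasFactorizationType f λ}`. -/
def hasFactorizationType {F : Type*} [Field F] (f : F[X]) {m : ℕ} (lam : m.Partition) : Prop :=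
  ∃ s : Finset F[X], (∀ π ∈ s, π.Monic ∧ Irreducible π) ∧ (∏ π ∈ s, π) = f ∧
    Multiset.map natDegree s.val = lam.parts

/-! Replacing `f(x)` by `c^m f(x/c)` (`Polynomial.scaleRoots`) multiplies every root by `c`, so it
preserves monicity, degree and irreducibility and multiplies the discriminant by `c^(m(m-1))`.
Since `gcd(q-1, m(m-1)) = 1`, the `m(m-1)`-th power map is a bijection of `F_q^×`, so `d₂/d₁` is
such a power and the corresponding scaling maps the polynomials of discriminant `d₁` bijectively
onto those of discriminant `d₂`. -/

namespace Polynomial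

variable {K : Type*} [Field K]

@[simps]
noncomputable def scaleRootsMulEquiv (r : Kˣ) : K[X] ≃* K[X] where
  toFun p := p.scaleRoots r
  invFun p := p.scaleRoots ↑r⁻¹
  left_inv p := by simp [← scaleRoots_mul]
  right_inv p := by simp [← scaleRoots_mul]
  map_mul' p q := mul_scaleRoots_of_noZeroDivisors p q r

lemma irreducible_scaleRoots_iff {r : K} (hr : r ≠ 0) {p : K[X]} :
    Irreducible (p.scaleRoots r) ↔ Irreducible p :=
  MulEquiv.irreducible_iff (f := scaleRootsMulEquiv (Units.mk0 r hr))

lemma scaleRoots_eq_C_mul_comp {r : K} (hr : r ≠ 0) (p : K[X]) :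
    p.scaleRoots r = C (r ^ p.natDegree) * p.comp (C r⁻¹ * X) := by
  ext i
  rw [coeff_scaleRoots, coeff_C_mul, comp_C_mul_X_coeff]
  rcases le_or_gt i p.natDegree with hi | hi
  · rw [pow_sub₀ _ hr hi, inv_pow]; ring
  · simp [coeff_eq_zero_of_natDegree_lt hi]

lemma eval_mul_derivative_scaleRoots {r : K} (hr : r ≠ 0) (p : K[X]) (a : K) :
    (derivative (p.scaleRoots r)).eval (r * a) =
      r ^ (p.natDegree - 1) * (derivative p).eval a := by
  rcases Nat.eq_zero_or_pos p.natDegree with h | h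
  · rw [eq_C_of_natDegree_eq_zero h]; simp
  rw [scaleRoots_eq_C_mul_comp hr, derivative_C_mul, derivative_comp, derivative_C_mul_X]
  simp only [eval_mul, eval_C, eval_comp, eval_X, inv_mul_cancel_left₀ hr]
  rw [pow_sub₀ _ hr h, pow_one]; ring

end Polynomial

lemma polyDisc_scaleRoots {F : Type*} [Field F] {c : F} (hc : c ≠ 0) (f : F[X]) :
    polyDisc (f.scaleRoots c) =
      algebraMap F (AlgebraicClosure F) c ^ (f.natDegree * (f.natDegree - 1)) * polyDisc f := by
  unfold polyDisc
  rw [natDegree_scaleRoots, leadingCoeff_scaleRoots]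
  split_ifs with hdeg
  · rw [Nat.mul_eq_zero.2 (by omega), pow_zero, one_mul]
  have hlc : (algebraMap F (AlgebraicClosure F)) f.leadingCoeff ≠ 0 := by
    rw [ne_eq, map_eq_zero, leadingCoeff_eq_zero]
    rintro rfl
    simp at hdeg
  have hc' : algebraMap F (AlgebraicClosure F) c ≠ 0 := by simpa using hc
  have hcard : Multiset.card (f.map (algebraMap F (AlgebraicClosure F))).roots = f.natDegree := by
    rw [splits_iff_card_roots.mp (IsAlgClosed.splits _), natDegree_map]
  rw [map_scaleRoots _ _ _ hlc, roots_scaleRoots _ hc'.isUnit, ← derivative_map,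
    map_scaleRoots _ _ _ hlc, Multiset.map_map]
  simp only [Function.comp_def, eval_mul_derivative_scaleRoots hc', natDegree_map]
  rw [Multiset.prod_map_mul, Multiset.map_const', Multiset.prod_replicate, hcard, ← pow_mul,
    derivative_map]
  ring

lemma ncard_monic_irreducible_polyDisc_pow_mul {F : Type*} [Field F] (c : Fˣ) (m : ℕ) (d : F) :
    {f : F[X] | f.Monic ∧ Irreducible f ∧ f.natDegree = m ∧
        polyDisc f = algebraMap F (AlgebraicClosure F) ((c : F) ^ (m * (m - 1)) * d)}.ncard =
    {f : F[X] | f.Monic ∧ Irreducible f ∧ f.natDegree = m ∧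
        polyDisc f = algebraMap F (AlgebraicClosure F) d}.ncard := by
  rw [← Set.ncard_preimage_of_injective_subset_range (scaleRootsMulEquiv c).injective
    (by simp [(scaleRootsMulEquiv c).surjective.range_eq])]
  congr 1
  ext f
  simp only [Set.mem_preimage, Set.mem_ofPred_eq, scaleRootsMulEquiv_apply, monic_scaleRoots_iff,
    irreducible_scaleRoots_iff c.ne_zero, natDegree_scaleRoots]
  refine and_congr_right fun _ => and_congr_right fun _ => and_congr_right fun hf => ?_
  rw [polyDisc_scaleRoots c.ne_zero, hf, map_mul, map_pow]
  exact mul_right_inj' (pow_ne_zero _ (by simp))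

theorem stmt3_general {F : Type*} [Field F] [Fintype F] (q m : ℕ) (hq : Fintype.card F = q)
    (hgcd : Nat.gcd (q - 1) (m * (m - 1)) = 1)
    (d₁ d₂ : F) (hd₁ : d₁ ≠ 0) (hd₂ : d₂ ≠ 0) :
    {f : F[X] | f.Monic ∧ Irreducible f ∧ f.natDegree = m ∧
        polyDisc f = algebraMap F (AlgebraicClosure F) d₁}.ncard =
    {f : F[X] | f.Monic ∧ Irreducible f ∧ f.natDegree = m ∧
        polyDisc f = algebraMap F (AlgebraicClosure F) d₂}.ncard := by
  have hcop : (Nat.card Fˣ).Coprime (m * (m - 1)) := by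
    rwa [Nat.card_eq_fintype_card, Fintype.card_units, hq]
  obtain ⟨c, hc⟩ := (Nat.Coprime.pow_left_bijective hcop).surjective
    (Units.mk0 d₂ hd₂ / Units.mk0 d₁ hd₁)
  have hd : d₂ = (c : F) ^ (m * (m - 1)) * d₁ := by
    rw [← Units.val_pow_eq_pow_val, show c ^ (m * (m - 1)) = _ from hc]
    simp [hd₁]
  rw [hd, ncard_monic_irreducible_polyDisc_pow_mul]

/-- If `q` is a power of `2` and `m ≥ 2` satisfies `gcd(q-1, m(m-1)) = 1`, then the
discriminants of the monic irreducible polynomials of degree `m` are equally distributed among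
the elements of `F_q^×`. -/
theorem stmt3 {F : Type*} [Field F] [Fintype F] (q m : ℕ) (hq : Fintype.card F = q)
    (h2 : ∃ n : ℕ, q = 2 ^ n) (hm : 2 ≤ m) (hgcd : Nat.gcd (q - 1) (m * (m - 1)) = 1)
    (d₁ d₂ : F) (hd₁ : d₁ ≠ 0) (hd₂ : d₂ ≠ 0) :
    {f : F[X] | f.Monic ∧ Irreducible f ∧ f.natDegree = m ∧
        polyDisc f = algebraMap F (AlgebraicClosure F) d₁}.ncard =
    {f : F[X] | f.Monic ∧ Irreducible f ∧ f.natDegree = m ∧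
        polyDisc f = algebraMap F (AlgebraicClosure F) d₂}.ncard :=
  stmt3_general q m hq hgcd d₁ d₂ hd₁ hd₂
end

section
/- Let q be an odd prime power, m ≥ 2 an integer, and λ a partition of m with k parts. Then the discriminant of any polynomial f ∈ S_{λ,F_q} is a nonzero element d ∈ F_q^× satisfying χ_q(d) = (-1)^(m-k). -/
open Polynomial
open scoped Classical

/-! The Frobenius `x ↦ x ^ q` permutes the roots of `f` in an algebraic closure; on the roots
of an irreducible factor of degree `d` it acts as a `d`-cycle, so its sign is `(-1) ^ (m - k)`.
It therefore multiplies the Vandermonde determinant `δ` of the roots by that sign, while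
`disc f = δ ^ 2`. So `δ ^ 2` lies in `F_q`, and it is a square there iff `δ` itself is fixed by
Frobenius, i.e. iff the sign is `1` (in odd characteristic `-δ ≠ δ`). -/
namespace Equiv.Perm

theorem sigmaCongrRight_mulSingle {α : Type*} [DecidableEq α] {β : α → Type*}
    (a : α) (g : Perm (β a)) :
    sigmaCongrRight (Pi.mulSingle a g) = g.extendDomain (sigmaSubtype a).symm := by
  ext ⟨a', b⟩ : 1
  by_cases h : a' = a
  · subst h
    rw [extendDomain_apply_subtype g (sigmaSubtype a').symm
      (show (⟨a', b⟩ : Sigma β).1 = a' from rfl)]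
    simp [sigmaSubtype]
  · rw [extendDomain_apply_not_subtype g (sigmaSubtype a).symm (b := ⟨a', b⟩) h]
    simp [Pi.mulSingle_eq_of_ne h]

theorem sign_sigmaCongrRight {α : Type*} [DecidableEq α] [Fintype α] {β : α → Type*}
    [∀ a, DecidableEq (β a)] [∀ a, Fintype (β a)] (σ : ∀ a, Perm (β a)) :
    sign (sigmaCongrRight σ) = ∏ a, sign (σ a) := by
  have key : sign.comp (sigmaCongrRightHom β) =
      ∏ a, sign.comp (Pi.evalMonoidHom (fun a => Perm (β a)) a) :=
    MonoidHom.pi_ext fun a g => by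
      simp only [MonoidHom.comp_apply, MonoidHom.finsetProd_apply, sigmaCongrRightHom_apply,
        sigmaCongrRight_mulSingle, sign_extendDomain, Pi.evalMonoidHom_apply]
      rw [Fintype.prod_eq_single a fun b hb => by simp [Pi.mulSingle_eq_of_ne hb]]
      simp
  simpa using DFunLike.congr_fun key σ

theorem sign_sigmaCongrRight_finRotate {α : Type*} [DecidableEq α] [Fintype α] (n : α → ℕ)
    (hn : ∀ a, n a ≠ 0) :
    sign (sigmaCongrRight fun a => finRotate (n a)) = (-1) ^ (∑ a, n a - Fintype.card α) := by
  rw [sign_sigmaCongrRight]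
  simp only [sign_finRotate]
  rw [Finset.prod_pow_eq_pow_sum, ← Finset.card_univ, Finset.card_eq_sum_ones,
    ← Finset.sum_tsub_distrib _ fun a _ => Nat.one_le_iff_ne_zero.mpr (hn a)]

end Equiv.Perm

theorem Polynomial.roots_eq_map_of_injective {R : Type*} [CommRing R] [IsDomain R] {p : R[X]}
    (hp : p ≠ 0) {ι : Type*} [Fintype ι] {u : ι → R} (hu : Function.Injective u)
    (hroot : ∀ i, p.IsRoot (u i)) (hcard : p.natDegree ≤ Fintype.card ι) :
    p.roots = Multiset.map u Finset.univ.val := by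
  refine (Multiset.eq_of_le_of_card_le ?_ ?_).symm
  · rw [Multiset.le_iff_subset (Finset.univ.nodup.map hu)]
    intro x hx
    obtain ⟨i, -, rfl⟩ := Multiset.mem_map.mp hx
    exact (mem_roots hp).mpr (hroot i)
  · simpa using (card_roots' p).trans hcard

namespace Matrix

theorem map_det_vandermonde_of_apply_eq {R : Type*} [CommRing R] {n : ℕ} (φ : R →+* R)
    (u : Fin n → R) (τ : Equiv.Perm (Fin n)) (h : ∀ i, φ (u i) = u (τ i)) :
    φ (vandermonde u).det = Equiv.Perm.sign τ * (vandermonde u).det := by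
  rw [RingHom.map_det, RingHom.mapMatrix_apply,
    show (vandermonde u).map φ = (vandermonde u).submatrix τ id by
      ext i j; simp [vandermonde_apply, h], det_permute]

theorem prod_prod_erase_sub_eq_det_vandermonde_sq {R : Type*} [CommRing R] {n : ℕ}
    (u : Fin n → R) :
    ∏ i, ∏ j ∈ Finset.univ.erase i, (u i - u j) =
      (-1) ^ (n * (n - 1) / 2) * (vandermonde u).det ^ 2 := by
  have hsplit : ∀ i, ∏ j ∈ Finset.univ.erase i, (u i - u j) =
      (-1) ^ (Finset.Ioi i).card * (∏ j ∈ Finset.Ioi i, (u j - u i)) *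
        ∏ j ∈ Finset.Iio i, (u i - u j) := fun i => by
    rw [← Finset.compl_singleton, ← Finset.Ioi_disjUnion_Iio, Finset.prod_disjUnion,
      ← Finset.prod_const, ← Finset.prod_mul_distrib]
    congr 1
    exact Finset.prod_congr rfl fun j _ => by ring
  have hswap :
      ∏ i, ∏ j ∈ Finset.Iio i, (u i - u j) = ∏ i, ∏ j ∈ Finset.Ioi i, (u j - u i) :=
    Finset.prod_comm' fun i j => by simp
  have hcard : ∑ i : Fin n, (Finset.Ioi i).card = n * (n - 1) / 2 := by
    simp only [Fin.card_Ioi]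
    rw [Fin.sum_univ_eq_sum_range (fun i => n - 1 - i), ← Finset.sum_range_id]
    exact Finset.sum_range_reflect (fun i => i) n
  rw [Finset.prod_congr rfl fun i _ => hsplit i, Finset.prod_mul_distrib, Finset.prod_mul_distrib,
    hswap, Finset.prod_pow_eq_pow_sum, hcard, det_vandermonde]
  ring

end Matrix

theorem polyDisc_eq_det_vandermonde_sq {F : Type*} [Field F] {f : F[X]} (hf : f.Monic) {m : ℕ}
    (hdeg : f.natDegree = m) {u : Fin m → AlgebraicClosure F}
    (hu : (f.map (algebraMap F (AlgebraicClosure F))).roots = Multiset.map u Finset.univ.val) :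
    polyDisc f = (Matrix.vandermonde u).det ^ 2 := by
  rw [polyDisc, hdeg]
  split_ifs with hm
  · rw [Matrix.det_vandermonde, Finset.prod_eq_one fun i _ => Finset.prod_eq_one fun j hj => ?_,
      one_pow]
    have := Finset.mem_Ioi.mp hj
    omega
  · have hsplit := IsAlgClosed.splits (f.map (algebraMap F (AlgebraicClosure F)))
    have hderiv : ∀ i, ((derivative f).map (algebraMap F _)).eval (u i) =
        ∏ j ∈ Finset.univ.erase i, (u i - u j) := fun i => by
      rw [← derivative_map, hsplit.eval_root_derivative (hf.map _) (by simp [hu]), hu,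
        ← Multiset.map_erase_of_mem _ _ (Finset.mem_univ_val i), Multiset.map_map]
      rfl
    rw [hf.leadingCoeff, map_one, one_pow, mul_one, hu, Multiset.map_map,
      ← Finset.prod_eq_multiset_prod]
    simp only [Function.comp_apply, hderiv]
    rw [Matrix.prod_prod_erase_sub_eq_det_vandermonde_sq, ← mul_assoc, ← pow_add,
      ← two_mul, pow_mul, neg_one_sq, one_pow, one_mul]

namespace FiniteField

variable {F K : Type*} [Field F] [Fintype F] [Field K] [Algebra F K]

theorem exists_algebraMap_eq_of_pow_card_eq {x : K} (hx : x ^ Fintype.card F = x) :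
    ∃ a : F, algebraMap F K a = x := by
  have hq := Fintype.one_lt_card (α := F)
  have hsplit : Splits (X ^ Fintype.card F - X : F[X]) := by
    rw [splits_iff_card_roots, roots_X_pow_card_sub_X, X_pow_card_sub_X_natDegree_eq F hq]
    rfl
  exact hsplit.mem_range_of_isRoot (X_pow_card_sub_X_ne_zero F hq) (by simp [hx])

theorem frobeniusAlgHom_pow_apply (k : ℕ) (x : K) :
    (frobeniusAlgHom F K ^ k) x = x ^ Fintype.card F ^ k := by
  rw [AlgHom.coe_pow, coe_frobeniusAlgHom, pow_iterate]

theorem pow_card_pow_eq_self_iff {π : F[X]} (hπ : Irreducible π) {α : K}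
    (hα : aeval α π = 0) (k : ℕ) : α ^ Fintype.card F ^ k = α ↔ π.natDegree ∣ k := by
  rw [hπ.natDegree_dvd_iff_dvd_X_pow_card_pow_sub_X, ← hπ.dvd_iff_aeval_eq_zero hα,
    Nat.card_eq_fintype_card]
  simp [sub_eq_zero]

theorem exists_roots_eq_frobenius_orbit [IsAlgClosed K] {π : F[X]} (hπ : Irreducible π) :
    ∃ w : Fin π.natDegree → K, Function.Injective w ∧
      (π.map (algebraMap F K)).roots = Multiset.map w Finset.univ.val ∧
      ∀ i, w i ^ Fintype.card F = w (finRotate _ i) := by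
  set q := Fintype.card F
  set n := π.natDegree
  obtain ⟨α, hα⟩ := IsAlgClosed.exists_aeval_eq_zero K π (degree_pos_of_irreducible hπ).ne'
  have hperiod := pow_card_pow_eq_self_iff hπ hα
  have hroot : ∀ k, aeval (α ^ q ^ k) π = 0 := fun k => by
    rw [← frobeniusAlgHom_pow_apply, aeval_algHom_apply, hα, map_zero]
  have hmod : ∀ k, α ^ q ^ k = α ^ q ^ (k % n) := fun k => by
    conv_lhs => rw [← Nat.div_add_mod k n, pow_add, pow_mul, (hperiod _).mpr (dvd_mul_right n _)]
  have hle : ∀ i j : Fin n, α ^ q ^ (i : ℕ) = α ^ q ^ (j : ℕ) → j ≤ i := by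
    intro i j hij
    have hfix : α ^ q ^ ((i : ℕ) + (n - j)) = α := by
      rw [pow_add, pow_mul, hij, ← pow_mul, ← pow_add, Nat.add_sub_cancel' j.isLt.le,
        (hperiod n).mpr dvd_rfl]
    have := Nat.le_of_dvd (by omega) ((hperiod _).mp hfix)
    exact Fin.le_iff_val_le_val.mpr (by omega)
  have hinj : Function.Injective fun i : Fin n => α ^ q ^ (i : ℕ) := fun i j hij =>
    le_antisymm (hle j i hij.symm) (hle i j hij)
  refine ⟨_, hinj, ?_, fun i => ?_⟩
  · refine roots_eq_map_of_injective (map_ne_zero hπ.ne_zero) hinj (fun i => ?_) (by simp [n])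
    rw [IsRoot, eval_map_algebraMap]
    exact hroot i
  · have := i.neZero
    rw [← pow_mul, ← pow_succ, hmod, finRotate_apply, Fin.val_add, Fin.val_one',
      Nat.add_mod_mod]

theorem exists_quadraticChar_eq_of_pow_card_eq_mul [DecidableEq F] (hF : ringChar F ≠ 2) {δ : K}
    (hδ : δ ≠ 0) {ε : ℤˣ} (hε : δ ^ Fintype.card F = ε * δ) :
    ∃ d : F, d ≠ 0 ∧ quadraticChar F d = ε ∧ algebraMap F K d = δ ^ 2 := by
  have hsq : (δ ^ 2) ^ Fintype.card F = δ ^ 2 := by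
    rw [← pow_mul, mul_comm, pow_mul, hε, mul_pow, ← Int.cast_pow,
      ← Units.val_pow_eq_pow_val, Int.units_sq, Units.val_one, Int.cast_one, one_mul]
  obtain ⟨d, hd⟩ := exists_algebraMap_eq_of_pow_card_eq hsq
  have hd0 : d ≠ 0 := by
    rintro rfl
    exact hδ (pow_eq_zero_iff two_ne_zero |>.mp (by rw [← hd, map_zero]))
  have hsquare : IsSquare d ↔ δ ^ Fintype.card F = δ := by
    constructor
    · rintro ⟨b, rfl⟩
      obtain ⟨b', hb'⟩ : ∃ b' : F, δ = algebraMap F K b' := by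
        rcases sq_eq_sq_iff_eq_or_eq_neg.mp (show δ ^ 2 = algebraMap F K b ^ 2 by
          rw [← hd, map_mul, sq]) with h | h
        exacts [⟨b, h⟩, ⟨-b, by rw [h, map_neg]⟩]
      rw [hb', ← map_pow, FiniteField.pow_card]
    · intro h
      obtain ⟨b, hb⟩ := exists_algebraMap_eq_of_pow_card_eq h
      exact ⟨b, (algebraMap F K).injective (by rw [hd, map_mul, hb, sq])⟩
  refine ⟨d, hd0, ?_, hd⟩
  rcases Int.units_eq_one_or ε with rfl | rfl
  · rw [Units.val_one, quadraticChar_one_iff_isSquare hd0, hsquare, hε, Units.val_one,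
      Int.cast_one, one_mul]
  · have h2 : (2 : K) ≠ 0 := by
      rw [← map_ofNat (algebraMap F K) 2]
      exact (_root_.map_ne_zero _).mpr (Ring.two_ne_zero hF)
    rw [Units.val_neg, Units.val_one, quadraticChar_neg_one_iff_not_isSquare, hsquare, hε]
    intro h
    push_cast at h
    exact mul_ne_zero h2 hδ (by linear_combination -h)

end FiniteField

namespace hasFactorizationType

variable {F : Type*} [Field F] {f : F[X]} {m : ℕ} {lam : m.Partition}

theorem monic (hf : hasFactorizationType f lam) : f.Monic := by
  obtain ⟨s, hs, rfl, -⟩ := hf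
  exact monic_prod_of_monic _ _ fun π hπ => (hs π hπ).1

theorem sum_natDegree_eq {s : Finset F[X]} (hparts : Multiset.map natDegree s.val = lam.parts) :
    ∑ π ∈ s, π.natDegree = m := by
  rw [Finset.sum_eq_multiset_sum, hparts, lam.parts_sum]

theorem natDegree_eq (hf : hasFactorizationType f lam) : f.natDegree = m := by
  obtain ⟨s, hs, rfl, hparts⟩ := hf
  rw [natDegree_prod_of_monic _ _ fun π hπ => (hs π hπ).1, sum_natDegree_eq hparts]

theorem exists_roots_frobenius_perm [Fintype F] {K : Type*} [Field K] [Algebra F K]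
    [IsAlgClosed K] (hf : hasFactorizationType f lam) :
    ∃ (u : Fin m → K) (τ : Equiv.Perm (Fin m)), Function.Injective u ∧
      (f.map (algebraMap F K)).roots = Multiset.map u Finset.univ.val ∧
      (∀ i, u i ^ Fintype.card F = u (τ i)) ∧
      Equiv.Perm.sign τ = (-1) ^ (m - lam.parts.card) := by
  have hmonic := hf.monic
  have hdeg := hf.natDegree_eq
  obtain ⟨s, hs, rfl, hparts⟩ := hf
  choose w hw_inj hw_roots hw_frob using fun π : s =>
    FiniteField.exists_roots_eq_frobenius_orbit (K := K) (hs π π.2).2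
  have hw_root : ∀ π i, aeval (w π i) (π : F[X]) = 0 := fun π i => by
    have := hw_roots π ▸ Multiset.mem_map_of_mem (w π) (Finset.mem_univ_val i)
    rwa [mem_roots (map_ne_zero (hs π π.2).2.ne_zero), IsRoot, eval_map_algebraMap] at this
  set v : (Σ π : s, Fin (π : F[X]).natDegree) → K := fun x => w x.1 x.2
  have hv_inj : Function.Injective v := by
    rintro ⟨π, i⟩ ⟨π', j⟩ h
    obtain rfl : π = π' := Subtype.ext <| by
      rw [minpoly.eq_of_irreducible_of_monic (hs π π.2).2 (hw_root π i) (hs π π.2).1,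
        minpoly.eq_of_irreducible_of_monic (hs π' π'.2).2 (hw_root π' j) (hs π' π'.2).1]
      exact congrArg (minpoly F) h
    exact congrArg (Sigma.mk π) (hw_inj π h)
  have hcard : Fintype.card (Σ π : s, Fin (π : F[X]).natDegree) = m := by
    simp only [Fintype.card_sigma, Fintype.card_fin]
    rw [Finset.sum_coe_sort s natDegree, sum_natDegree_eq hparts]
  set e := Fintype.equivFinOfCardEq hcard
  refine ⟨v ∘ e.symm, e.permCongr (Equiv.Perm.sigmaCongrRight fun π => finRotate _),
    hv_inj.comp e.symm.injective, ?_, fun i => ?_, ?_⟩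
  · refine roots_eq_map_of_injective (map_ne_zero hmonic.ne_zero) (hv_inj.comp e.symm.injective)
      (fun i => ?_) (by simp [hdeg])
    rw [IsRoot, eval_map_algebraMap, map_prod]
    exact Finset.prod_eq_zero (e.symm i).1.2 (hw_root _ _)
  · simp only [Function.comp_apply, Equiv.permCongr_apply, Equiv.symm_apply_apply]
    exact hw_frob _ _
  · rw [Equiv.Perm.sign_permCongr, Equiv.Perm.sign_sigmaCongrRight_finRotate
      (fun π : s => (π : F[X]).natDegree) fun π => (hs π π.2).2.natDegree_pos.ne',
      Finset.sum_coe_sort s natDegree, sum_natDegree_eq hparts, Fintype.card_coe, ← hparts,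
      Multiset.card_map, Finset.card_val]

end hasFactorizationType

theorem stmt12_general {F : Type*} [Field F] [Fintype F] [DecidableEq F] (m : ℕ)
    (hodd : Odd (Fintype.card F)) (lam : m.Partition) (f : F[X])
    (hf : hasFactorizationType f lam) :
    ∃ d : F, d ≠ 0 ∧ quadraticChar F d = (-1 : ℤ) ^ (m - lam.parts.card) ∧
      polyDisc f = algebraMap F (AlgebraicClosure F) d := by
  obtain ⟨u, τ, hu_inj, hu_roots, hu_frob, hτ⟩ :=
    hf.exists_roots_frobenius_perm (K := AlgebraicClosure F)
  set δ := (Matrix.vandermonde u).det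
  have hδ : δ ^ Fintype.card F = Equiv.Perm.sign τ * δ :=
    Matrix.map_det_vandermonde_of_apply_eq (FiniteField.frobeniusAlgHom F _).toRingHom u τ hu_frob
  have hF : ringChar F ≠ 2 := by
    rw [Ne, FiniteField.even_card_iff_char_two, ← Nat.even_iff, Nat.not_even_iff_odd]
    exact hodd
  obtain ⟨d, hd0, hχ, hd⟩ := FiniteField.exists_quadraticChar_eq_of_pow_card_eq_mul hF
    (Matrix.det_vandermonde_ne_zero_iff.mpr hu_inj) hδ
  refine ⟨d, hd0, by rw [hχ, hτ]; push_cast; rfl, ?_⟩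
  rw [hd, polyDisc_eq_det_vandermonde_sq hf.monic hf.natDegree_eq hu_roots]

/-- For odd `q` and a partition `λ` of `m ≥ 2` with `k` parts, the discriminant of any
polynomial in `S_{λ,F_q}` is a `d ∈ F_q^×` with `χ_q(d) = (-1)^(m-k)`. -/
theorem stmt12 {F : Type*} [Field F] [Fintype F] [DecidableEq F] (m : ℕ)
    (hodd : Odd (Fintype.card F)) (hm : 2 ≤ m) (lam : m.Partition) (f : F[X])
    (hf : hasFactorizationType f lam) :
    ∃ d : F, d ≠ 0 ∧ quadraticChar F d = (-1 : ℤ) ^ (m - lam.parts.card) ∧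
      polyDisc f = algebraMap F (AlgebraicClosure F) d :=
  stmt12_general m hodd lam f hf
end
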